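/- arXiv:2310.00606 — 4 statements merged into one kernel-verified Lean document; each statement's English description precedes it below -/
import Mathlib

section
/- For every positive integer α and all integers n and k, the truncated Fourier weights sum to one over a full period of the spatial grid: Δw · Δr · ∑_{l=−N†/2}^{N†/2−1} ∑_{d=−K†/2}^{K†/2−1} g̃_{n−l, k−d}(α) = 1. -/
open Real MeasureTheory

noncomputable section

/-- Fourier transform of the jump density `b`. -/
def Bfun (b : ℝ → ℝ) (η : ℝ) : ℂ :=
  ∫ y : ℝ, (b y : ℂ) * Complex.exp (-(2 * (π : ℂ) * Complex.I * η * y))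

/-- Fourier symbol `Ψ` of the Green's function. -/
def Psi (σZ σR ρ lam κ : ℝ) (b : ℝ → ℝ) (η ξ : ℝ) : ℂ :=
  ((-(σZ ^ 2 / 2) * (2 * π * η) ^ 2 - ρ * σZ * σR * (2 * π * η) * (2 * π * ξ)
      - σR ^ 2 / 2 * (2 * π * ξ) ^ 2 - lam : ℝ) : ℂ)
    - ((lam * κ : ℝ) : ℂ) * (2 * (π : ℂ) * Complex.I * η)
    + ((lam : ℝ) : ℂ) * (starRingEnd ℂ) (Bfun b η)

/-- Fourier transform `G(η, ξ, Δτ) = exp(Ψ(η, ξ) Δτ)` of the Green's function. -/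
def Gfun (σZ σR ρ lam κ : ℝ) (b : ℝ → ℝ) (Δτ η ξ : ℝ) : ℂ :=
  Complex.exp (Psi σZ σR ρ lam κ b η ξ * Δτ)

/-- `sin² x / x²`, interpreted as `1` at `x = 0`. -/
def sinc2 (x : ℝ) : ℝ := if x = 0 then 1 else Real.sin x ^ 2 / x ^ 2

/-- Trigonometric factor `tg(s, z)`. -/
def tg (Nd Kd : ℕ) (s z : ℤ) : ℝ := sinc2 (π * s / Nd) * sinc2 (π * z / Kd)

/-- Truncated Fourier weights `g̃_{p,q}(α)`. -/
def gtil (σZ σR ρ lam κ : ℝ) (b : ℝ → ℝ) (Pd Qd Δτ : ℝ) (Nd Kd : ℕ)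
    (α : ℕ) (p q : ℤ) : ℂ :=
  (1 / ((Pd : ℂ) * Qd)) *
    ∑ s ∈ Finset.Ico (-((α : ℤ) * Nd / 2)) ((α : ℤ) * Nd / 2),
      ∑ z ∈ Finset.Ico (-((α : ℤ) * Kd / 2)) ((α : ℤ) * Kd / 2),
        Complex.exp (2 * (π : ℂ) * Complex.I * s * p / Nd) *
          Complex.exp (2 * (π : ℂ) * Complex.I * z * q / Kd) *
          ((tg Nd Kd s z : ℝ) : ℂ) * Gfun σZ σR ρ lam κ b Δτ (s / Pd) (z / Qd)


/-- geometric sum of zpow over an Ico of full period length is zero -/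
lemma geom_Ico_zero {ζ : ℂ} (hζ : ζ ≠ 0) (h1 : ζ ≠ 1) (N : ℕ) (hN : ζ ^ N = 1)
    (a m : ℤ) : ∑ l ∈ Finset.Ico a (a + N), ζ ^ (m - l) = 0 := by
  have hinv1 : ζ⁻¹ ≠ 1 := by
    intro h; exact h1 (by rw [← inv_inv ζ, h, inv_one])
  have hstep : ∑ l ∈ Finset.Ico a (a + (N:ℤ)), ζ ^ (m - l)
      = ∑ j ∈ Finset.range N, ζ ^ (m - a) * (ζ⁻¹) ^ j := by
    refine Finset.sum_nbij' (fun l => (l - a).toNat) (fun j => a + (j:ℤ)) ?_ ?_ ?_ ?_ ?_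
    · intro l hl; simp only [Finset.mem_Ico] at hl; simp only [Finset.mem_range]; omega
    · intro j hj; simp only [Finset.mem_range] at hj; simp only [Finset.mem_Ico]; omega
    · intro l hl; simp only [Finset.mem_Ico] at hl; omega
    · intro j hj; simp only [Finset.mem_range] at hj; omega
    · intro l hl
      simp only [Finset.mem_Ico] at hl
      have h1' : ((l - a).toNat : ℤ) = l - a := by omega
      rw [inv_pow, ← zpow_natCast, h1', ← zpow_neg, ← zpow_add₀ hζ]
      ring_nf
  rw [hstep, ← Finset.mul_sum, geom_sum_eq hinv1]
  have : (ζ⁻¹) ^ N = 1 := by rw [inv_pow, hN, inv_one]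
  rw [this]
  simp

/-- Sum of exponentials over a full period vanishes when the frequency isn't a multiple. -/
lemma sum_exp_period_zero (N : ℕ) (hN : 0 < N) (s : ℤ) (hs : ¬ ((N:ℤ) ∣ s)) (a m : ℤ) :
    ∑ l ∈ Finset.Ico a (a + N), Complex.exp (2 * (π:ℂ) * Complex.I * s * ((m - l : ℤ) : ℂ) / N) = 0 := by
  set ζ : ℂ := Complex.exp (2 * (π:ℂ) * Complex.I * s / N) with hζdef
  have hζ0 : ζ ≠ 0 := Complex.exp_ne_zero _
  have hNne : (N:ℂ) ≠ 0 := by exact_mod_cast hN.ne'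
  have hζN : ζ ^ N = 1 := by
    rw [hζdef, ← Complex.exp_nat_mul]
    have : (N:ℂ) * (2 * (π:ℂ) * Complex.I * s / N) = (s:ℂ) * (2 * π * Complex.I) := by
      field_simp
    rw [this, Complex.exp_int_mul_two_pi_mul_I]
  have hζ1 : ζ ≠ 1 := by
    intro h
    rw [hζdef, Complex.exp_eq_one_iff] at h
    obtain ⟨j, hj⟩ := h
    apply hs
    refine ⟨j, ?_⟩
    have h2 : (2 * (π:ℂ) * Complex.I) ≠ 0 := by
      simp [Real.pi_ne_zero, Complex.I_ne_zero, Complex.ofReal_ne_zero]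
    have : (s : ℂ) = (N : ℂ) * j := by
      field_simp at hj
      have := hj
      -- hj : 2 * π * I * s = j * (2 * π * I) * N  (roughly)
      apply mul_left_cancel₀ h2
      ring_nf
      ring_nf at this
      linear_combination (2 * (π:ℂ) * Complex.I) * this
    exact_mod_cast this
  have hterm : ∀ l : ℤ, Complex.exp (2 * (π:ℂ) * Complex.I * s * ((m - l : ℤ) : ℂ) / N)
      = ζ ^ (m - l) := by
    intro l
    rw [hζdef, ← Complex.exp_int_mul]
    congr 1
    push_cast
    ring
  simp only [hterm]
  exact geom_Ico_zero hζ0 hζ1 N hζN a m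

lemma sinc2_int_mul_pi (j : ℤ) (hj : j ≠ 0) : sinc2 (j * π) = 0 := by
  have harg : (j : ℝ) * π ≠ 0 := by
    apply mul_ne_zero
    · exact_mod_cast hj
    · exact Real.pi_ne_zero
  rw [sinc2, if_neg harg, Real.sin_int_mul_pi]
  simp

lemma tg_left_zero (Nd Kd : ℕ) (hNd : 0 < Nd) (s z : ℤ) (hdvd : (Nd:ℤ) ∣ s) (hs : s ≠ 0) :
    tg Nd Kd s z = 0 := by
  obtain ⟨j, hj⟩ := hdvd
  have hj0 : j ≠ 0 := by rintro rfl; simp at hj; exact hs hj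
  have : π * (s:ℝ) / Nd = (j:ℝ) * π := by
    have hN : (Nd:ℝ) ≠ 0 := by exact_mod_cast hNd.ne'
    rw [hj]; push_cast; field_simp
  rw [tg, this, sinc2_int_mul_pi j hj0, zero_mul]

lemma tg_right_zero (Nd Kd : ℕ) (hKd : 0 < Kd) (s z : ℤ) (hdvd : (Kd:ℤ) ∣ z) (hz : z ≠ 0) :
    tg Nd Kd s z = 0 := by
  obtain ⟨j, hj⟩ := hdvd
  have hj0 : j ≠ 0 := by rintro rfl; simp at hj; exact hz hj
  have : π * (z:ℝ) / Kd = (j:ℝ) * π := by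
    have hK : (Kd:ℝ) ≠ 0 := by exact_mod_cast hKd.ne'
    rw [hj]; push_cast; field_simp
  rw [tg, this, sinc2_int_mul_pi j hj0, mul_zero]

lemma Bfun_zero (b : ℝ → ℝ) : Bfun b 0 = ((∫ y : ℝ, b y : ℝ) : ℂ) := by
  rw [Bfun]
  simp only [Complex.ofReal_zero, mul_zero, zero_mul, neg_zero, Complex.exp_zero, mul_one]
  exact integral_ofReal

lemma Gfun_zero (σZ σR ρ lam κ : ℝ) (b : ℝ → ℝ) (Δτ : ℝ) (hb1 : ∫ y : ℝ, b y = 1) :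
    Gfun σZ σR ρ lam κ b Δτ 0 0 = 1 := by
  have hPsi : Psi σZ σR ρ lam κ b 0 0 = 0 := by
    rw [Psi, Bfun_zero b, hb1]
    simp
  rw [Gfun, hPsi, zero_mul, Complex.exp_zero]

set_option maxHeartbeats 1600000 in
/-- For every positive integer `α` and all integers `n`, `k`, the truncated Fourier
weights sum to one over a full period of the spatial grid:
`Δw · Δr · ∑_{l=−N†/2}^{N†/2−1} ∑_{d=−K†/2}^{K†/2−1} g̃_{n−l, k−d}(α) = 1`. -/
theorem weights_sum_to_one
    (σZ σR ρ lam κ Pd Qd Δτ : ℝ) (b : ℝ → ℝ) (Nd Kd : ℕ)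
    (hσZ : 0 < σZ) (hσR : 0 < σR) (hρ : |ρ| < 1) (hlam : 0 ≤ lam)
    (hb0 : ∀ y, 0 ≤ b y) (hbint : Integrable b) (hb1 : ∫ y : ℝ, b y = 1)
    (hPd : 0 < Pd) (hQd : 0 < Qd)
    (hNd : 0 < Nd) (hNde : Even Nd) (hKd : 0 < Kd) (hKde : Even Kd)
    (α : ℕ) (hα : 0 < α) (n k : ℤ) :
    ((Pd / Nd * (Qd / Kd) : ℝ) : ℂ) *
        ∑ l ∈ Finset.Ico (-((Nd : ℤ) / 2)) ((Nd : ℤ) / 2),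
          ∑ d ∈ Finset.Ico (-((Kd : ℤ) / 2)) ((Kd : ℤ) / 2),
            gtil σZ σR ρ lam κ b Pd Qd Δτ Nd Kd α (n - l) (k - d) = 1 := by
  classical
  have hNdZ : (2:ℤ) ≤ (Nd:ℤ) := by
    obtain ⟨t, ht⟩ := hNde
    have : 0 < t := by omega
    omega
  have hKdZ : (2:ℤ) ≤ (Kd:ℤ) := by
    obtain ⟨t, ht⟩ := hKde
    have : 0 < t := by omega
    omega
  have hαZ : (1:ℤ) ≤ (α:ℤ) := by exact_mod_cast hα
  have hNd2 : ((Nd:ℤ)/2) = -((Nd:ℤ)/2) + Nd := by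
    obtain ⟨t, ht⟩ := hNde; omega
  have hKd2 : ((Kd:ℤ)/2) = -((Kd:ℤ)/2) + Kd := by
    obtain ⟨t, ht⟩ := hKde; omega
  have hSα : (2:ℤ) ≤ (α:ℤ) * Nd := by nlinarith
  have hZα : (2:ℤ) ≤ (α:ℤ) * Kd := by nlinarith
  set L := Finset.Ico (-((Nd:ℤ)/2)) ((Nd:ℤ)/2) with hL
  set D := Finset.Ico (-((Kd:ℤ)/2)) ((Kd:ℤ)/2) with hD
  set S := Finset.Ico (-((α:ℤ)*Nd/2)) ((α:ℤ)*Nd/2) with hS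
  set Z := Finset.Ico (-((α:ℤ)*Kd/2)) ((α:ℤ)*Kd/2) with hZ
  have hL' : L = Finset.Ico (-((Nd:ℤ)/2)) (-((Nd:ℤ)/2) + Nd) := by
    rw [hL]; exact congrArg _ hNd2
  have hD' : D = Finset.Ico (-((Kd:ℤ)/2)) (-((Kd:ℤ)/2) + Kd) := by
    rw [hD]; exact congrArg _ hKd2
  have h0S : (0:ℤ) ∈ S := by rw [hS, Finset.mem_Ico]; omega
  have h0Z : (0:ℤ) ∈ Z := by rw [hZ, Finset.mem_Ico]; omega
  -- inner evaluation for each (s, z)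
  have inner_eval : ∀ s : ℤ, ∀ z : ℤ,
      (∑ l ∈ L, Complex.exp (2 * (π:ℂ) * Complex.I * s * ((n - l : ℤ):ℂ) / Nd)) *
        (∑ d ∈ D, Complex.exp (2 * (π:ℂ) * Complex.I * z * ((k - d : ℤ):ℂ) / Kd)) *
        ((tg Nd Kd s z : ℝ) : ℂ) *
        Gfun σZ σR ρ lam κ b Δτ ((s:ℝ) / Pd) ((z:ℝ) / Qd)
      = if s = 0 then (if z = 0 then ((Nd:ℂ) * Kd) else 0) else 0 := by
    intro s z
    by_cases hs : s = 0
    · rw [if_pos hs]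
      by_cases hz : z = 0
      · rw [if_pos hz]
        subst hs; subst hz
        have hL1 : ∑ l ∈ L, Complex.exp (2 * (π:ℂ) * Complex.I * ((0:ℤ):ℂ) * ((n - l : ℤ):ℂ) / Nd)
            = (Nd : ℂ) := by
          have h1 : ∀ l ∈ L, Complex.exp (2 * (π:ℂ) * Complex.I * ((0:ℤ):ℂ) * ((n - l : ℤ):ℂ) / Nd)
              = 1 := by
            intro l _
            norm_num
          rw [Finset.sum_congr rfl h1, Finset.sum_const, Int.card_Ico]
          have h2 : (((Nd:ℤ)/2) - (-((Nd:ℤ)/2))).toNat = Nd := by omega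
          rw [h2]
          simp
        have hD1 : ∑ d ∈ D, Complex.exp (2 * (π:ℂ) * Complex.I * ((0:ℤ):ℂ) * ((k - d : ℤ):ℂ) / Kd)
            = (Kd : ℂ) := by
          have h1 : ∀ d ∈ D, Complex.exp (2 * (π:ℂ) * Complex.I * ((0:ℤ):ℂ) * ((k - d : ℤ):ℂ) / Kd)
              = 1 := by
            intro d _
            norm_num
          rw [Finset.sum_congr rfl h1, Finset.sum_const, Int.card_Ico]
          have h2 : (((Kd:ℤ)/2) - (-((Kd:ℤ)/2))).toNat = Kd := by omega
          rw [h2]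
          simp
        have htg : tg Nd Kd 0 0 = 1 := by
          simp [tg, sinc2]
        have hG : Gfun σZ σR ρ lam κ b Δτ (((0:ℤ):ℝ) / Pd) (((0:ℤ):ℝ) / Qd) = 1 := by
          have e1 : (((0:ℤ):ℝ) / Pd) = 0 := by norm_num
          have e2 : (((0:ℤ):ℝ) / Qd) = 0 := by norm_num
          rw [e1, e2]
          exact Gfun_zero σZ σR ρ lam κ b Δτ hb1
        rw [hL1, hD1, htg, hG]
        norm_num
      · rw [if_neg hz]
        by_cases hdvd : (Kd:ℤ) ∣ z
        · rw [tg_right_zero Nd Kd hKd s z hdvd hz]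
          push_cast
          ring
        · have h0 : ∑ d ∈ D, Complex.exp (2 * (π:ℂ) * Complex.I * z * ((k - d : ℤ):ℂ) / Kd) = 0 := by
            rw [hD']
            exact sum_exp_period_zero Kd hKd z hdvd _ k
          rw [h0]
          ring
    · rw [if_neg hs]
      by_cases hdvd : (Nd:ℤ) ∣ s
      · rw [tg_left_zero Nd Kd hNd s z hdvd hs]
        push_cast
        ring
      · have h0 : ∑ l ∈ L, Complex.exp (2 * (π:ℂ) * Complex.I * s * ((n - l : ℤ):ℂ) / Nd) = 0 := by
          rw [hL']
          exact sum_exp_period_zero Nd hNd s hdvd _ n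
        rw [h0]
        ring
  -- swapping a quadruple sum
  have swap4 : ∀ (f : ℤ → ℤ → ℤ → ℤ → ℂ),
      ∑ l ∈ L, ∑ d ∈ D, ∑ s ∈ S, ∑ z ∈ Z, f l d s z
        = ∑ s ∈ S, ∑ z ∈ Z, ∑ l ∈ L, ∑ d ∈ D, f l d s z := by
    intro f
    calc ∑ l ∈ L, ∑ d ∈ D, ∑ s ∈ S, ∑ z ∈ Z, f l d s z
        = ∑ p ∈ L ×ˢ D, ∑ q ∈ S ×ˢ Z, f p.1 p.2 q.1 q.2 := by
          simp only [Finset.sum_product]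
      _ = ∑ q ∈ S ×ˢ Z, ∑ p ∈ L ×ˢ D, f p.1 p.2 q.1 q.2 := Finset.sum_comm
      _ = ∑ s ∈ S, ∑ z ∈ Z, ∑ l ∈ L, ∑ d ∈ D, f l d s z := by
          simp only [Finset.sum_product]
  -- expand and swap the sums
  have expand : ∑ l ∈ L, ∑ d ∈ D, gtil σZ σR ρ lam κ b Pd Qd Δτ Nd Kd α (n - l) (k - d)
      = (1 / ((Pd:ℂ) * Qd)) * ∑ s ∈ S, ∑ z ∈ Z,
          (∑ l ∈ L, Complex.exp (2 * (π:ℂ) * Complex.I * s * ((n - l : ℤ):ℂ) / Nd)) *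
            (∑ d ∈ D, Complex.exp (2 * (π:ℂ) * Complex.I * z * ((k - d : ℤ):ℂ) / Kd)) *
            ((tg Nd Kd s z : ℝ) : ℂ) *
            Gfun σZ σR ρ lam κ b Δτ ((s:ℝ) / Pd) ((z:ℝ) / Qd) := by
    simp only [gtil, ← Finset.mul_sum]
    congr 1
    rw [swap4]
    refine Finset.sum_congr rfl fun s _ => Finset.sum_congr rfl fun z _ => ?_
    rw [Finset.sum_mul_sum, Finset.sum_mul, Finset.sum_mul]
    refine Finset.sum_congr rfl fun l _ => ?_
    rw [Finset.sum_mul, Finset.sum_mul]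
  rw [expand]
  have collapse : ∑ s ∈ S, ∑ z ∈ Z,
      (∑ l ∈ L, Complex.exp (2 * (π:ℂ) * Complex.I * s * ((n - l : ℤ):ℂ) / Nd)) *
        (∑ d ∈ D, Complex.exp (2 * (π:ℂ) * Complex.I * z * ((k - d : ℤ):ℂ) / Kd)) *
        ((tg Nd Kd s z : ℝ) : ℂ) *
        Gfun σZ σR ρ lam κ b Δτ ((s:ℝ) / Pd) ((z:ℝ) / Qd)
      = (Nd:ℂ) * Kd := by
    have step : ∑ s ∈ S, ∑ z ∈ Z,
        (∑ l ∈ L, Complex.exp (2 * (π:ℂ) * Complex.I * s * ((n - l : ℤ):ℂ) / Nd)) *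
          (∑ d ∈ D, Complex.exp (2 * (π:ℂ) * Complex.I * z * ((k - d : ℤ):ℂ) / Kd)) *
          ((tg Nd Kd s z : ℝ) : ℂ) *
          Gfun σZ σR ρ lam κ b Δτ ((s:ℝ) / Pd) ((z:ℝ) / Qd)
        = ∑ s ∈ S, (if s = 0 then (∑ z ∈ Z, if z = 0 then ((Nd:ℂ) * Kd) else 0) else 0) := by
      refine Finset.sum_congr rfl fun s _ => ?_
      rw [Finset.sum_congr rfl fun z _ => inner_eval s z]
      by_cases hs : s = 0
      · subst hs; simp
      · simp [hs]
    rw [step, Finset.sum_ite_eq' S 0 (fun _ => (∑ z ∈ Z, if z = 0 then ((Nd:ℂ) * Kd) else 0)),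
      if_pos h0S, Finset.sum_ite_eq' Z 0 (fun _ => ((Nd:ℂ) * Kd)), if_pos h0Z]
  rw [collapse]
  have hPd' : (Pd:ℂ) ≠ 0 := Complex.ofReal_ne_zero.2 hPd.ne'
  have hQd' : (Qd:ℂ) ≠ 0 := Complex.ofReal_ne_zero.2 hQd.ne'
  have hNd' : ((Nd:ℂ)) ≠ 0 := Nat.cast_ne_zero.2 hNd.ne'
  have hKd' : ((Kd:ℂ)) ≠ 0 := Nat.cast_ne_zero.2 hKd.ne'
  push_cast
  field_simp

end
end

section
/- For all real η and ξ, the real part of the Fourier symbol satisfies Re(Ψ(η, ξ)) ≤ −(1 − |ρ|)(σ_Z²/2)(2πη)² − (1 − |ρ|)(σ_R²/2)(2πξ)². -/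
open Real MeasureTheory

noncomputable section

/-- For all real `η` and `ξ`:
`Re(Ψ(η, ξ)) ≤ −(1 − |ρ|)(σ_Z²/2)(2πη)² − (1 − |ρ|)(σ_R²/2)(2πξ)²`. -/
theorem re_Psi_bound
    (σZ σR ρ lam κ : ℝ) (b : ℝ → ℝ)
    (hσZ : 0 < σZ) (hσR : 0 < σR) (hρ : |ρ| < 1) (hlam : 0 ≤ lam)
    (hb0 : ∀ y, 0 ≤ b y) (hbint : Integrable b) (hb1 : ∫ y : ℝ, b y = 1)
    (η ξ : ℝ) :
    (Psi σZ σR ρ lam κ b η ξ).re ≤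
      -(1 - |ρ|) * (σZ ^ 2 / 2) * (2 * π * η) ^ 2
        - (1 - |ρ|) * (σR ^ 2 / 2) * (2 * π * ξ) ^ 2 := by
  have hnorm : ‖Bfun b η‖ ≤ 1 := by
    calc ‖Bfun b η‖
        ≤ ∫ y : ℝ, ‖(b y : ℂ) * Complex.exp (-(2 * (π : ℂ) * Complex.I * η * y))‖ :=
          norm_integral_le_integral_norm _
      _ = ∫ y : ℝ, b y := by
          refine integral_congr_ae (Filter.Eventually.of_forall fun y => ?_)
          simp only [norm_mul, Complex.norm_exp]
          have h0 : (-(2 * (π : ℂ) * Complex.I * η * y)).re = 0 := by simp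
          rw [h0, Real.exp_zero, mul_one, Complex.norm_real, Real.norm_eq_abs, abs_of_nonneg (hb0 y)]
      _ = 1 := hb1
  have hre : (Bfun b η).re ≤ 1 :=
    le_trans (Complex.re_le_norm _) hnorm
  have hPsi : (Psi σZ σR ρ lam κ b η ξ).re =
      -(σZ ^ 2 / 2) * (2 * π * η) ^ 2 - ρ * σZ * σR * (2 * π * η) * (2 * π * ξ)
        - σR ^ 2 / 2 * (2 * π * ξ) ^ 2 - lam + lam * (Bfun b η).re := by
    simp [Psi, Complex.add_re, Complex.sub_re, Complex.mul_re, Complex.mul_im,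
      ← Complex.ofReal_pow]
  rw [hPsi]
  set u := 2 * π * η
  set v := 2 * π * ξ
  have h1 : lam * (Bfun b η).re ≤ lam := by nlinarith
  have h2 : -(ρ * σZ * σR * u * v) ≤ |ρ| * ((σZ ^ 2 / 2) * u ^ 2 + (σR ^ 2 / 2) * v ^ 2) := by
    have habs : -(ρ * (u * v)) ≤ |ρ| * (|u| * |v|) := by
      calc -(ρ * (u * v)) ≤ |ρ * (u * v)| := neg_le_abs _
        _ = |ρ| * (|u| * |v|) := by rw [abs_mul, abs_mul]
    have h3 : σZ * σR * (|u| * |v|) ≤ (σZ ^ 2 / 2) * u ^ 2 + (σR ^ 2 / 2) * v ^ 2 := by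
      nlinarith [sq_nonneg (σZ * |u| - σR * |v|), sq_abs u, sq_abs v]
    nlinarith [abs_nonneg ρ, mul_nonneg (abs_nonneg u) (abs_nonneg v), mul_pos hσZ hσR]
  nlinarith
end
end

section
/- For every Δτ ≥ 0 and all real η and ξ, the modulus of the Fourier transform of the Green's function satisfies |G(η, ξ, Δτ)| = |exp(Ψ(η, ξ) Δτ)| ≤ exp(−(1 − |ρ|)(σ_Z²/2)(2πη)² Δτ) · exp(−(1 − |ρ|)(σ_R²/2)(2πξ)² Δτ). -/
open Real MeasureTheory

noncomputable section

lemma abs_Bfun_le_one (b : ℝ → ℝ) (hb0 : ∀ y, 0 ≤ b y) (hb1 : ∫ y : ℝ, b y = 1) (η : ℝ) :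
    ‖Bfun b η‖ ≤ 1 := by
  have h : ‖Bfun b η‖ ≤ ∫ y : ℝ, ‖(b y : ℂ) * Complex.exp (-(2 * (π : ℂ) * Complex.I * η * y))‖ :=
    norm_integral_le_integral_norm _
  have heq : ∀ y : ℝ, ‖(b y : ℂ) * Complex.exp (-(2 * (π : ℂ) * Complex.I * η * y))‖ = b y := by
    intro y
    rw [norm_mul, Complex.norm_exp]
    have : (-(2 * (π : ℂ) * Complex.I * η * y)).re = 0 := by simp
    rw [this, Real.exp_zero, mul_one, Complex.norm_real, Real.norm_eq_abs, abs_of_nonneg (hb0 y)]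
  calc ‖Bfun b η‖ ≤ _ := h
    _ = ∫ y : ℝ, b y := by simp_rw [heq]
    _ = 1 := hb1

lemma Psi_re (σZ σR ρ lam κ : ℝ) (b : ℝ → ℝ) (η ξ : ℝ) :
    (Psi σZ σR ρ lam κ b η ξ).re =
      (-(σZ ^ 2 / 2) * (2 * π * η) ^ 2 - ρ * σZ * σR * (2 * π * η) * (2 * π * ξ)
        - σR ^ 2 / 2 * (2 * π * ξ) ^ 2 - lam) + lam * (Bfun b η).re := by
  simp [Psi, Complex.add_re, Complex.sub_re, Complex.mul_re, Complex.mul_im, ← Complex.ofReal_pow]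

/-- For every `Δτ ≥ 0` and all real `η`, `ξ`:
`|G(η, ξ, Δτ)| = |exp(Ψ(η, ξ) Δτ)| ≤ exp(−(1 − |ρ|)(σ_Z²/2)(2πη)² Δτ) ·
exp(−(1 − |ρ|)(σ_R²/2)(2πξ)² Δτ)`. -/
theorem abs_Gfun_bound
    (σZ σR ρ lam κ : ℝ) (b : ℝ → ℝ)
    (hσZ : 0 < σZ) (hσR : 0 < σR) (hρ : |ρ| < 1) (hlam : 0 ≤ lam)
    (hb0 : ∀ y, 0 ≤ b y) (hbint : Integrable b) (hb1 : ∫ y : ℝ, b y = 1)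
    (Δτ : ℝ) (hΔτ : 0 ≤ Δτ) (η ξ : ℝ) :
    ‖Gfun σZ σR ρ lam κ b Δτ η ξ‖ ≤
      Real.exp (-(1 - |ρ|) * (σZ ^ 2 / 2) * (2 * π * η) ^ 2 * Δτ) *
        Real.exp (-(1 - |ρ|) * (σR ^ 2 / 2) * (2 * π * ξ) ^ 2 * Δτ) := by
  rw [Gfun, Complex.norm_exp, ← Real.exp_add]
  apply Real.exp_le_exp.mpr
  have hre : (Psi σZ σR ρ lam κ b η ξ * (Δτ : ℂ)).re = (Psi σZ σR ρ lam κ b η ξ).re * Δτ := by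
    simp [Complex.mul_re]
  rw [hre]
  have hB : (Bfun b η).re ≤ 1 := by
    calc (Bfun b η).re ≤ ‖Bfun b η‖ := Complex.re_le_norm _
      _ ≤ 1 := abs_Bfun_le_one b hb0 hb1 η
  have hkey : (Psi σZ σR ρ lam κ b η ξ).re ≤
      -(1 - |ρ|) * (σZ ^ 2 / 2) * (2 * π * η) ^ 2 +
        -(1 - |ρ|) * (σR ^ 2 / 2) * (2 * π * ξ) ^ 2 := by
    rw [Psi_re]
    have habs : 0 ≤ |ρ| := abs_nonneg ρ
    have h1 : -(ρ * (σZ * (2 * π * η) * (σR * (2 * π * ξ)))) ≤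
        |ρ| * ((σZ * (2 * π * η)) ^ 2 + (σR * (2 * π * ξ)) ^ 2) / 2 := by
      have ht : -(ρ * (σZ * (2 * π * η) * (σR * (2 * π * ξ)))) ≤
          |ρ * (σZ * (2 * π * η) * (σR * (2 * π * ξ)))| := neg_le_abs _
      rw [abs_mul, abs_mul] at ht
      have h2 : |σZ * (2 * π * η)| * |σR * (2 * π * ξ)| ≤
          ((σZ * (2 * π * η)) ^ 2 + (σR * (2 * π * ξ)) ^ 2) / 2 := by
        nlinarith [sq_nonneg (|σZ * (2 * π * η)| - |σR * (2 * π * ξ)|),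
          sq_abs (σZ * (2 * π * η)), sq_abs (σR * (2 * π * ξ))]
      calc -(ρ * (σZ * (2 * π * η) * (σR * (2 * π * ξ)))) ≤ _ := ht
        _ ≤ |ρ| * (((σZ * (2 * π * η)) ^ 2 + (σR * (2 * π * ξ)) ^ 2) / 2) :=
          mul_le_mul_of_nonneg_left h2 habs
        _ = |ρ| * ((σZ * (2 * π * η)) ^ 2 + (σR * (2 * π * ξ)) ^ 2) / 2 := by ring
    have hlB : lam * (Bfun b η).re ≤ lam := by
      nlinarith
    nlinarith [h1, hlB]
  calc (Psi σZ σR ρ lam κ b η ξ).re * Δτ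
      ≤ (-(1 - |ρ|) * (σZ ^ 2 / 2) * (2 * π * η) ^ 2 +
          -(1 - |ρ|) * (σR ^ 2 / 2) * (2 * π * ξ) ^ 2) * Δτ :=
        mul_le_mul_of_nonneg_right hkey hΔτ
    _ = -(1 - |ρ|) * (σZ ^ 2 / 2) * (2 * π * η) ^ 2 * Δτ +
        -(1 - |ρ|) * (σR ^ 2 / 2) * (2 * π * ξ) ^ 2 * Δτ := by ring

end
end

section
/- For every even positive integer α and all integers p, q, the truncated weight g̃_{p,q}(α) is a real number; that is, its imaginary part is zero. -/
open Real MeasureTheory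

noncomputable section

lemma Bfun_neg (b : ℝ → ℝ) (η : ℝ) :
    Bfun b (-η) = (starRingEnd ℂ) (Bfun b η) := by
  unfold Bfun
  rw [← integral_conj]
  congr 1
  funext y
  rw [map_mul, ← Complex.exp_conj, Complex.conj_ofReal]
  congr 1
  simp only [map_neg, map_mul, Complex.conj_ofReal, Complex.conj_I, map_ofNat]
  push_cast
  ring

lemma Psi_conj (σZ σR ρ lam κ : ℝ) (b : ℝ → ℝ) (η ξ : ℝ) :
    (starRingEnd ℂ) (Psi σZ σR ρ lam κ b η ξ) = Psi σZ σR ρ lam κ b (-η) (-ξ) := by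
  unfold Psi
  rw [Bfun_neg]
  simp only [map_add, map_sub, map_mul, Complex.conj_ofReal, Complex.conj_I,
    Complex.conj_conj, map_ofNat]
  push_cast
  ring

lemma Gfun_conj (σZ σR ρ lam κ : ℝ) (b : ℝ → ℝ) (Δτ η ξ : ℝ) :
    (starRingEnd ℂ) (Gfun σZ σR ρ lam κ b Δτ η ξ) = Gfun σZ σR ρ lam κ b Δτ (-η) (-ξ) := by
  unfold Gfun
  rw [← Complex.exp_conj, map_mul, Psi_conj, Complex.conj_ofReal]

lemma sinc2_neg (x : ℝ) : sinc2 (-x) = sinc2 x := by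
  unfold sinc2
  simp [neg_eq_zero, neg_sq]

lemma sinc2_eq_zero (x : ℝ) (hx : x ≠ 0) (hs : Real.sin x = 0) : sinc2 x = 0 := by
  simp [sinc2, hx, hs]

lemma sinc2_pi_int_mul (m : ℤ) (hm : m ≠ 0) : sinc2 (π * m) = 0 := by
  apply sinc2_eq_zero
  · exact mul_ne_zero Real.pi_ne_zero (Int.cast_ne_zero.mpr hm)
  · rw [mul_comm]
    exact Real.sin_int_mul_pi m

lemma tg_neg (Nd Kd : ℕ) (s z : ℤ) : tg Nd Kd (-s) (-z) = tg Nd Kd s z := by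
  unfold tg
  push_cast
  rw [mul_neg, neg_div, sinc2_neg, mul_neg, neg_div, sinc2_neg]

lemma tg_fst_zero (Nd Kd : ℕ) (hNd : 0 < Nd) (s z : ℤ) (hs : s ≠ 0)
    (hdvd : (Nd : ℤ) ∣ s) : tg Nd Kd s z = 0 := by
  obtain ⟨c, rfl⟩ := hdvd
  have hc : c ≠ 0 := by rintro rfl; simp at hs
  have harg : π * (((Nd : ℤ) * c : ℤ) : ℝ) / Nd = π * (c : ℝ) := by
    have : (Nd : ℝ) ≠ 0 := Nat.cast_ne_zero.mpr hNd.ne'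
    push_cast
    field_simp
  unfold tg
  rw [harg, sinc2_pi_int_mul c hc, zero_mul]

lemma tg_snd_zero (Nd Kd : ℕ) (hKd : 0 < Kd) (s z : ℤ) (hz : z ≠ 0)
    (hdvd : (Kd : ℤ) ∣ z) : tg Nd Kd s z = 0 := by
  obtain ⟨c, rfl⟩ := hdvd
  have hc : c ≠ 0 := by rintro rfl; simp at hz
  have harg : π * (((Kd : ℤ) * c : ℤ) : ℝ) / Kd = π * (c : ℝ) := by
    have : (Kd : ℝ) ≠ 0 := Nat.cast_ne_zero.mpr hKd.ne'
    push_cast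
    field_simp
  unfold tg
  rw [harg, sinc2_pi_int_mul c hc, mul_zero]

lemma sum_neg_eq (M : ℤ) (g : ℤ → ℂ) (h1 : g M = 0) (h2 : g (-M) = 0) :
    ∑ s ∈ Finset.Ico (-M) M, g (-s) = ∑ s ∈ Finset.Ico (-M) M, g s := by
  have e1 : ∑ s ∈ Finset.Ico (-M) M, g (-s) = ∑ s ∈ Finset.Ioc (-M) M, g s := by
    refine Finset.sum_nbij' (fun s => -s) (fun s => -s) ?_ ?_ ?_ ?_ ?_ <;>
      intros <;> simp_all [Finset.mem_Ico, Finset.mem_Ioc] <;> omega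
  rw [e1, ← Finset.Icc_erase_left, ← Finset.Icc_erase_right,
    Finset.sum_erase _ h2, Finset.sum_erase _ h1]

/-- The summand of `gtil`. -/
def Tterm (σZ σR ρ lam κ Pd Qd Δτ : ℝ) (b : ℝ → ℝ) (Nd Kd : ℕ) (p q s z : ℤ) : ℂ :=
  Complex.exp (2 * (π : ℂ) * Complex.I * s * p / Nd) *
    Complex.exp (2 * (π : ℂ) * Complex.I * z * q / Kd) *
    ((tg Nd Kd s z : ℝ) : ℂ) * Gfun σZ σR ρ lam κ b Δτ (s / Pd) (z / Qd)

lemma Tterm_conj (σZ σR ρ lam κ Pd Qd Δτ : ℝ) (b : ℝ → ℝ) (Nd Kd : ℕ) (p q s z : ℤ) :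
    (starRingEnd ℂ) (Tterm σZ σR ρ lam κ Pd Qd Δτ b Nd Kd p q s z)
      = Tterm σZ σR ρ lam κ Pd Qd Δτ b Nd Kd p q (-s) (-z) := by
  unfold Tterm
  rw [map_mul, map_mul, map_mul, ← Complex.exp_conj, ← Complex.exp_conj,
    Complex.conj_ofReal, Gfun_conj, ← tg_neg Nd Kd s z]
  have e1 : (starRingEnd ℂ) (2 * (π : ℂ) * Complex.I * s * p / Nd)
      = 2 * (π : ℂ) * Complex.I * ((-s : ℤ) : ℂ) * p / Nd := by
    simp only [map_div₀, map_mul, Complex.conj_ofReal, Complex.conj_I,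
      map_ofNat, map_intCast, map_natCast]
    push_cast
    ring
  have e2 : (starRingEnd ℂ) (2 * (π : ℂ) * Complex.I * z * q / Kd)
      = 2 * (π : ℂ) * Complex.I * ((-z : ℤ) : ℂ) * q / Kd := by
    simp only [map_div₀, map_mul, Complex.conj_ofReal, Complex.conj_I,
      map_ofNat, map_intCast, map_natCast]
    push_cast
    ring
  rw [e1, e2]
  have e3 : -((s : ℝ) / Pd) = ((-s : ℤ) : ℝ) / Pd := by push_cast; ring
  have e4 : -((z : ℝ) / Qd) = ((-z : ℤ) : ℝ) / Qd := by push_cast; ring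
  rw [e3, e4]

/-- For every even positive integer `α` and all integers `p`, `q`, the truncated
weight `g̃_{p,q}(α)` is a real number, i.e. its imaginary part vanishes. -/
theorem gtil_isReal
    (σZ σR ρ lam κ Pd Qd Δτ : ℝ) (b : ℝ → ℝ) (Nd Kd : ℕ)
    (hσZ : 0 < σZ) (hσR : 0 < σR) (hρ : |ρ| < 1) (hlam : 0 ≤ lam)
    (hb0 : ∀ y, 0 ≤ b y) (hbint : Integrable b) (hb1 : ∫ y : ℝ, b y = 1)
    (hPd : 0 < Pd) (hQd : 0 < Qd)
    (hNd : 0 < Nd) (hNde : Even Nd) (hKd : 0 < Kd) (hKde : Even Kd)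
    (α : ℕ) (hα : 0 < α) (hαe : Even α) (p q : ℤ) :
    (gtil σZ σR ρ lam κ b Pd Qd Δτ Nd Kd α p q).im = 0 := by
  obtain ⟨m, hm⟩ := hαe
  subst hm
  have hm0 : 0 < m := by omega
  rw [← Complex.conj_eq_iff_im]
  have hM : ((m + m : ℕ) : ℤ) * Nd / 2 = (m : ℤ) * Nd := by
    push_cast
    rw [show ((m : ℤ) + m) * Nd = 2 * ((m : ℤ) * Nd) by ring]
    exact Int.mul_ediv_cancel_left _ (by norm_num)
  have hK : ((m + m : ℕ) : ℤ) * Kd / 2 = (m : ℤ) * Kd := by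
    push_cast
    rw [show ((m : ℤ) + m) * Kd = 2 * ((m : ℤ) * Kd) by ring]
    exact Int.mul_ediv_cancel_left _ (by norm_num)
  have hg : gtil σZ σR ρ lam κ b Pd Qd Δτ Nd Kd (m + m) p q
      = (1 / ((Pd : ℂ) * Qd)) *
        ∑ s ∈ Finset.Ico (-((m : ℤ) * Nd)) ((m : ℤ) * Nd),
          ∑ z ∈ Finset.Ico (-((m : ℤ) * Kd)) ((m : ℤ) * Kd),
            Tterm σZ σR ρ lam κ Pd Qd Δτ b Nd Kd p q s z := by
    unfold gtil Tterm
    rw [hM, hK]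
  rw [hg, map_mul]
  have hc : (starRingEnd ℂ) (1 / ((Pd : ℂ) * Qd)) = 1 / ((Pd : ℂ) * Qd) := by
    simp [map_div₀, Complex.conj_ofReal]
  rw [hc]
  congr 1
  -- boundary vanishing
  have hMne : (m : ℤ) * Nd ≠ 0 := by positivity
  have hKne : (m : ℤ) * Kd ≠ 0 := by positivity
  have hTfst : ∀ (s z : ℤ), s = (m : ℤ) * Nd ∨ s = -((m : ℤ) * Nd) →
      Tterm σZ σR ρ lam κ Pd Qd Δτ b Nd Kd p q s z = 0 := by
    intro s z hs
    have h0 : tg Nd Kd s z = 0 := by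
      apply tg_fst_zero Nd Kd hNd s z
      · rcases hs with rfl | rfl
        · exact hMne
        · simpa using hMne
      · rcases hs with rfl | rfl
        · exact ⟨m, mul_comm _ _⟩
        · exact Dvd.dvd.neg_right ⟨m, mul_comm _ _⟩
    simp [Tterm, h0]
  have hTsnd : ∀ (s z : ℤ), z = (m : ℤ) * Kd ∨ z = -((m : ℤ) * Kd) →
      Tterm σZ σR ρ lam κ Pd Qd Δτ b Nd Kd p q s z = 0 := by
    intro s z hz
    have h0 : tg Nd Kd s z = 0 := by
      apply tg_snd_zero Nd Kd hKd s z
      · rcases hz with rfl | rfl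
        · exact hKne
        · simpa using hKne
      · rcases hz with rfl | rfl
        · exact ⟨m, mul_comm _ _⟩
        · exact Dvd.dvd.neg_right ⟨m, mul_comm _ _⟩
    simp [Tterm, h0]
  rw [map_sum]
  calc ∑ s ∈ Finset.Ico (-((m : ℤ) * Nd)) ((m : ℤ) * Nd),
        (starRingEnd ℂ) (∑ z ∈ Finset.Ico (-((m : ℤ) * Kd)) ((m : ℤ) * Kd),
          Tterm σZ σR ρ lam κ Pd Qd Δτ b Nd Kd p q s z)
      = ∑ s ∈ Finset.Ico (-((m : ℤ) * Nd)) ((m : ℤ) * Nd),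
        ∑ z ∈ Finset.Ico (-((m : ℤ) * Kd)) ((m : ℤ) * Kd),
          Tterm σZ σR ρ lam κ Pd Qd Δτ b Nd Kd p q (-s) (-z) := by
        refine Finset.sum_congr rfl fun s _ => ?_
        rw [map_sum]
        exact Finset.sum_congr rfl fun z _ => Tterm_conj _ _ _ _ _ _ _ _ _ _ _ _ _ _ _
    _ = ∑ s ∈ Finset.Ico (-((m : ℤ) * Nd)) ((m : ℤ) * Nd),
        ∑ z ∈ Finset.Ico (-((m : ℤ) * Kd)) ((m : ℤ) * Kd),
          Tterm σZ σR ρ lam κ Pd Qd Δτ b Nd Kd p q (-s) z := by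
        refine Finset.sum_congr rfl fun s _ => ?_
        exact sum_neg_eq _ _ (hTsnd _ _ (Or.inl rfl)) (hTsnd _ _ (Or.inr rfl))
    _ = ∑ s ∈ Finset.Ico (-((m : ℤ) * Nd)) ((m : ℤ) * Nd),
        ∑ z ∈ Finset.Ico (-((m : ℤ) * Kd)) ((m : ℤ) * Kd),
          Tterm σZ σR ρ lam κ Pd Qd Δτ b Nd Kd p q s z := by
        refine sum_neg_eq ((m : ℤ) * Nd)
          (fun s => ∑ z ∈ Finset.Ico (-((m : ℤ) * Kd)) ((m : ℤ) * Kd),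
            Tterm σZ σR ρ lam κ Pd Qd Δτ b Nd Kd p q s z) ?_ ?_ <;>
          refine Finset.sum_eq_zero fun z _ => ?_
        · exact hTfst _ _ (Or.inl rfl)
        · exact hTfst _ _ (Or.inr rfl)


end
end
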